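/- arXiv:2404.01267 — 2 statements merged into one kernel-verified Lean document; each statement's English description precedes it below -/
import Mathlib

section
/- Let f : ℝ^d → ℝ be twice continuously differentiable, μ-strongly convex with M-Lipschitz Hessian and minimizer x_*. Let x_k ∈ ℝ^d, define G_k = ∫_0^1 ∇²f(x_k + τ(x_* - x_k)) dτ and C_k = (M/μ^{3/2})√(2(f(x_k) - f(x_*))). Then for any τ̃ ∈ [0,1], (1/(1 + C_k)) G_k ⪯ ∇²f(x_k + τ̃(x_* - x_k)) ⪯ (1 + C_k) G_k. -/
/-!
Strong convexity gives `G ⪰ μ I` and, by a second-order Taylor bound along the segment from the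
minimizer, `‖x_k - x_*‖ ≤ √(2 (f x_k - f x_*) / μ)`. Since `G` averages the Hessian over the
segment, the Lipschitz bound gives `‖∇²f(x_τ) - G‖ ≤ M ‖x_k - x_*‖ ≤ μ C`, hence
`∇²f(x_τ) - G ⪯ μ C I ⪯ C G`, and symmetrically `G - ∇²f(x_τ) ⪯ C ∇²f(x_τ)`.
-/

open scoped InnerProductSpace Matrix.Norms.L2Operator MatrixOrder
open Set MeasureTheory

lemma mul_sq_le_sub_of_hasDerivAt_of_le {g g' g'' : ℝ → ℝ} {c : ℝ}
    (hg : ∀ t, HasDerivAt g (g' t) t) (hg' : ∀ t, HasDerivAt g' (g'' t) t)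
    (hc : ∀ t, c ≤ g'' t) (h0 : g' 0 = 0) {t : ℝ} (ht : 0 ≤ t) :
    c / 2 * t ^ 2 ≤ g t - g 0 := by
  have hψ' : Monotone fun s => g' s - c * s :=
    monotone_of_hasDerivAt_nonneg (fun s => (hg' s).sub ((hasDerivAt_id s).const_mul c))
      (fun s => by simpa using hc s)
  have hψ : ∀ s, HasDerivAt (fun s => g s - c / 2 * s ^ 2) (g' s - c * s) s := fun s =>
    ((hg s).sub ((hasDerivAt_pow 2 s).const_mul (c / 2))).congr_deriv (by ring)
  have hmono : MonotoneOn (fun s => g s - c / 2 * s ^ 2) (Ici 0) :=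
    monotoneOn_of_hasDerivWithinAt_nonneg (convex_Ici 0)
      (fun s _ => (hψ s).continuousAt.continuousWithinAt)
      (fun s _ => (hψ s).hasDerivWithinAt)
      (fun s hs => by
        rw [interior_Ici] at hs
        simpa [h0] using hψ' hs.le)
  have := hmono self_mem_Ici ht ht
  simp only at this
  linarith

lemma IsLocalMin.mul_sq_norm_sub_le_sub {E : Type*} [NormedAddCommGroup E]
    [InnerProductSpace ℝ E] [CompleteSpace E] {f : E → ℝ} {H : E → E →L[ℝ] E} {μ : ℝ} {xs : E}
    (hmin : IsLocalMin f xs) (hf : Differentiable ℝ f)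
    (hH : ∀ x, HasFDerivAt (gradient f) (H x) x) (hμ : ∀ x y, μ * ‖y‖ ^ 2 ≤ ⟪H x y, y⟫_ℝ)
    (x : E) : μ / 2 * ‖x - xs‖ ^ 2 ≤ f x - f xs := by
  set v := x - xs
  have hline : ∀ t : ℝ, HasDerivAt (fun t : ℝ => xs + t • v) v t := fun t => by
    simpa using ((hasDerivAt_id t).smul_const v).const_add xs
  have hgrad : gradient f xs = 0 := by rw [gradient, hmin.fderiv_eq_zero, map_zero]
  have key := mul_sq_le_sub_of_hasDerivAt_of_le (g := fun t => f (xs + t • v))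
    (g' := fun t => ⟪gradient f (xs + t • v), v⟫_ℝ) (g'' := fun t => ⟪H (xs + t • v) v, v⟫_ℝ)
    (fun t => ((hf _).hasGradientAt.hasFDerivAt.comp_hasDerivAt t (hline t)).congr_deriv
      (by simp))
    (fun t => by simpa using ((hH _).comp_hasDerivAt t (hline t)).inner ℝ (hasDerivAt_const t v))
    (fun t => hμ _ v) (by simp [hgrad]) zero_le_one
  simpa [v, mul_div_right_comm] using key

lemma norm_comp_add_smul_sub_le {E F : Type*} [SeminormedAddCommGroup E] [NormedSpace ℝ E]
    [SeminormedAddCommGroup F] {g : E → F} {M : ℝ} (hM : 0 ≤ M)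
    (hg : ∀ x y, ‖g x - g y‖ ≤ M * ‖x - y‖) (x v : E) {s t : ℝ} (hs : s ∈ Icc (0 : ℝ) 1)
    (ht : t ∈ Icc (0 : ℝ) 1) : ‖g (x + s • v) - g (x + t • v)‖ ≤ M * ‖v‖ := calc
  ‖g (x + s • v) - g (x + t • v)‖ ≤ M * (|s - t| * ‖v‖) := by
    simpa [← sub_smul, norm_smul] using hg (x + s • v) (x + t • v)
  _ ≤ M * (1 * ‖v‖) := by
    gcongr
    exact abs_sub_le_iff.2 ⟨by linarith [hs.2, ht.1], by linarith [hs.1, ht.2]⟩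
  _ = M * ‖v‖ := by rw [one_mul]

lemma norm_sub_intervalIntegral_le {F : Type*} [NormedAddCommGroup F] [NormedSpace ℝ F]
    [CompleteSpace F] {γ : ℝ → F} {y : F} {K : ℝ} (hγ : IntervalIntegrable γ volume 0 1)
    (h : ∀ s ∈ Icc (0 : ℝ) 1, ‖y - γ s‖ ≤ K) : ‖y - ∫ s in (0 : ℝ)..1, γ s‖ ≤ K := by
  have hsub : y - ∫ s in (0 : ℝ)..1, γ s = ∫ s in (0 : ℝ)..1, (y - γ s) := by
    simp [intervalIntegral.integral_sub intervalIntegrable_const hγ]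
  simpa [hsub] using intervalIntegral.norm_integral_le_of_norm_le_const
    (a := 0) (b := 1) fun s hs => h s (Ioc_subset_Icc_self (by simpa using hs))

lemma mul_le_of_half_mul_sq_le {μ M r Δ : ℝ} (hμ : 0 < μ) (hM : 0 ≤ M) (hr : 0 ≤ r)
    (h : μ / 2 * r ^ 2 ≤ Δ) : M * r ≤ μ * (M / μ ^ ((3 : ℝ) / 2) * √(2 * Δ)) := by
  have hsμ : 0 < √μ := Real.sqrt_pos.2 hμ
  have hsqrt : r * √μ ≤ √(2 * Δ) := by
    rw [← Real.sqrt_sq hr, ← Real.sqrt_mul (sq_nonneg r)]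
    exact Real.sqrt_le_sqrt (by linarith)
  have hpow : μ ^ ((3 : ℝ) / 2) = μ * √μ := by
    rw [show (3 : ℝ) / 2 = 1 + 1 / 2 by norm_num, Real.rpow_add hμ, Real.rpow_one,
      Real.sqrt_eq_rpow]
  rw [hpow, show μ * (M / (μ * √μ) * √(2 * Δ)) = M * (√(2 * Δ) / √μ) by field_simp]
  gcongr
  rwa [le_div_iff₀ hsμ]

lemma EuclideanSpace.real_norm_sq_eq_dotProduct {n : Type*} [Fintype n]
    (y : EuclideanSpace ℝ n) : ‖y‖ ^ 2 = y.ofLp ⬝ᵥ y.ofLp := by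
  rw [EuclideanSpace.real_norm_sq_eq]
  simp [dotProduct, sq]

namespace Matrix

variable {n : Type*}

lemma smul_le_smul_of_le {A B : Matrix n n ℝ} (h : A ≤ B) {c : ℝ} (hc : 0 ≤ c) :
    c • A ≤ c • B := by
  rw [le_iff, ← smul_sub]
  exact (le_iff.mp h).smul hc

lemma one_div_smul_le_of_le_smul {A B : Matrix n n ℝ} {c : ℝ} (hc : 0 < c) (h : A ≤ c • B) :
    (1 / c) • A ≤ B := by
  simpa [smul_smul, hc.ne'] using smul_le_smul_of_le h (one_div_pos.2 hc).le

variable [DecidableEq n]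

lemma isHermitian_smul_one (c : ℝ) : (c • 1 : Matrix n n ℝ).IsHermitian :=
  isHermitian_one.smul (IsSelfAdjoint.all c)

lemma isHermitian_of_smul_one_le {A : Matrix n n ℝ} {μ : ℝ} (h : μ • 1 ≤ A) : A.IsHermitian := by
  simpa using (le_iff.mp h).isHermitian.add (isHermitian_smul_one μ)

variable [Fintype n]

lemma mul_sq_norm_le_inner_toEuclideanCLM {A : Matrix n n ℝ} {μ : ℝ} (h : μ • 1 ≤ A)
    (y : EuclideanSpace ℝ n) : μ * ‖y‖ ^ 2 ≤ ⟪toEuclideanCLM (𝕜 := ℝ) A y, y⟫_ℝ := by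
  have := (le_iff.mp h).dotProduct_mulVec_nonneg y.ofLp
  rw [real_inner_comm, inner_toEuclideanCLM, EuclideanSpace.real_norm_sq_eq_dotProduct]
  simp only [sub_mulVec, smul_mulVec, one_mulVec, dotProduct_sub, dotProduct_smul, star_trivial,
    smul_eq_mul, sub_nonneg] at this
  exact this

lemma dotProduct_mulVec_le_norm_mul (A : Matrix n n ℝ) (x : n → ℝ) :
    x ⬝ᵥ A *ᵥ x ≤ ‖A‖ * (x ⬝ᵥ x) := by
  set y : EuclideanSpace ℝ n := WithLp.toLp 2 x
  calc x ⬝ᵥ A *ᵥ x = ⟪y, toEuclideanCLM (𝕜 := ℝ) A y⟫_ℝ := (inner_toEuclideanCLM A y y).symm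
    _ ≤ ‖y‖ * ‖toEuclideanCLM (𝕜 := ℝ) A y‖ := real_inner_le_norm _ _
    _ ≤ ‖y‖ * (‖A‖ * ‖y‖) := by gcongr; exact (toEuclideanCLM (𝕜 := ℝ) A).le_opNorm y
    _ = ‖A‖ * ‖y‖ ^ 2 := by ring
    _ = ‖A‖ * (x ⬝ᵥ x) := by rw [EuclideanSpace.real_norm_sq_eq_dotProduct]

lemma le_smul_one_of_norm_le {A : Matrix n n ℝ} (hA : A.IsHermitian) {c : ℝ} (h : ‖A‖ ≤ c) :
    A ≤ c • 1 := by
  refine PosSemidef.of_dotProduct_mulVec_nonneg ((isHermitian_smul_one c).sub hA) fun x => ?_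
  have hquad := dotProduct_mulVec_le_norm_mul A x
  have hx : 0 ≤ x ⬝ᵥ x := by simpa using dotProduct_self_star_nonneg x
  simp only [sub_mulVec, smul_mulVec, one_mulVec, dotProduct_sub, dotProduct_smul, star_trivial,
    smul_eq_mul]
  nlinarith

lemma le_one_add_smul_of_norm_sub_le {A B : Matrix n n ℝ} {μ C : ℝ} (hA : A.IsHermitian)
    (hB : μ • 1 ≤ B) (hC : 0 ≤ C) (h : ‖A - B‖ ≤ μ * C) : A ≤ (1 + C) • B := by
  have : A - B ≤ C • B := calc
    A - B ≤ (μ * C) • 1 := le_smul_one_of_norm_le (hA.sub (isHermitian_of_smul_one_le hB)) h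
    _ = C • (μ • 1) := by rw [smul_smul, mul_comm]
    _ ≤ C • B := smul_le_smul_of_le hB hC
  rw [add_smul, one_smul]
  simpa [add_comm] using add_le_add_right this B

section Integral

variable {γ : ℝ → Matrix n n ℝ} {a b : ℝ}

lemma isHermitian_intervalIntegral (hγ : IntervalIntegrable γ volume a b)
    (h : ∀ s ∈ uIcc a b, (γ s).IsHermitian) : (∫ s in a..b, γ s).IsHermitian := by
  have hstar :=
    (starL' ℝ : Matrix n n ℝ ≃L[ℝ] _).toContinuousLinearMap.intervalIntegral_comp_comm hγ
  simp only [ContinuousLinearEquiv.coe_coe, starL'_apply, star_eq_conjTranspose] at hstar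
  rw [IsHermitian, ← hstar]
  exact intervalIntegral.integral_congr fun s hs => h s hs

lemma dotProduct_intervalIntegral_mulVec (hγ : IntervalIntegrable γ volume a b) (x : n → ℝ) :
    x ⬝ᵥ (∫ s in a..b, γ s) *ᵥ x = ∫ s in a..b, x ⬝ᵥ γ s *ᵥ x := by
  let L : Matrix n n ℝ →ₗ[ℝ] ℝ :=
    LinearMap.applyₗ x ∘ₗ LinearMap.applyₗ x ∘ₗ (toLinearMap₂' ℝ).toLinearMap
  simpa [L, toLinearMap₂'_apply'] using
    ((LinearMap.toContinuousLinearMap L).intervalIntegral_comp_comm hγ).symm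

lemma intervalIntegral_nonneg (hab : a ≤ b) (hγ : IntervalIntegrable γ volume a b)
    (h : ∀ s ∈ Icc a b, 0 ≤ γ s) : 0 ≤ ∫ s in a..b, γ s := by
  refine PosSemidef.nonneg (PosSemidef.of_dotProduct_mulVec_nonneg
    (isHermitian_intervalIntegral hγ fun s hs => ?_) fun x => ?_)
  · exact (nonneg_iff_posSemidef.mp (h s (uIcc_of_le hab ▸ hs))).isHermitian
  · rw [star_trivial, dotProduct_intervalIntegral_mulVec hγ]
    exact intervalIntegral.integral_nonneg hab fun s hs => by
      simpa using (nonneg_iff_posSemidef.mp (h s hs)).dotProduct_mulVec_nonneg x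

lemma smul_one_le_intervalIntegral {μ : ℝ} (hγ : IntervalIntegrable γ volume 0 1)
    (h : ∀ s ∈ Icc (0 : ℝ) 1, μ • 1 ≤ γ s) : μ • 1 ≤ ∫ s in (0 : ℝ)..1, γ s := by
  have hsub : ∫ s in (0 : ℝ)..1, (γ s - μ • 1) = (∫ s in (0 : ℝ)..1, γ s) - μ • 1 := by
    simp [intervalIntegral.integral_sub hγ intervalIntegrable_const]
  exact sub_nonneg.1 (hsub ▸ intervalIntegral_nonneg zero_le_one
    (hγ.sub intervalIntegrable_const) fun s hs => sub_nonneg.2 (h s hs))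

end Integral

end Matrix

theorem hessian_on_segment_vs_averaged_general {d : ℕ}
    (f : EuclideanSpace ℝ (Fin d) → ℝ) (μ M : ℝ) (hμ : 0 < μ) (hM : 0 < M)
    (Hess : EuclideanSpace ℝ (Fin d) → Matrix (Fin d) (Fin d) ℝ)
    (hf : ContDiff ℝ 2 f)
    (hHess : ∀ x, HasFDerivAt (gradient f) (Matrix.toEuclideanCLM (𝕜 := ℝ) (Hess x)) x)
    (hstr : ∀ x, (Hess x - μ • (1 : Matrix (Fin d) (Fin d) ℝ)).PosSemidef)
    (hlipH : ∀ x y, ‖Hess x - Hess y‖ ≤ M * ‖x - y‖)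
    (xs : EuclideanSpace ℝ (Fin d)) (hmin : ∀ y, f xs ≤ f y)
    (xk : EuclideanSpace ℝ (Fin d))
    (G : Matrix (Fin d) (Fin d) ℝ)
    (hG : G = ∫ τ in (0:ℝ)..1, Hess (xk + τ • (xs - xk)))
    (C : ℝ) (hC : C = (M / μ ^ ((3:ℝ)/2)) * Real.sqrt (2 * (f xk - f xs))) :
    ∀ τ ∈ Set.Icc (0:ℝ) 1,
      (Hess (xk + τ • (xs - xk)) - (1 / (1 + C)) • G).PosSemidef ∧
      ((1 + C) • G - Hess (xk + τ • (xs - xk))).PosSemidef := by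
  intro τ hτ
  have hstr' (x) : μ • 1 ≤ Hess x := hstr x
  have hseg : IntervalIntegrable (fun s : ℝ => Hess (xk + s • (xs - xk))) volume 0 1 := by
    have : Continuous Hess :=
      (LipschitzWith.of_dist_le' (K := M) (by simpa only [dist_eq_norm] using hlipH)).continuous
    exact (by fun_prop : Continuous _).intervalIntegrable 0 1
  have hGμ : μ • 1 ≤ G := hG ▸ Matrix.smul_one_le_intervalIntegral hseg fun s _ => hstr' _
  have hgrowth : μ / 2 * ‖xs - xk‖ ^ 2 ≤ f xk - f xs := by
    simpa [norm_sub_rev] using IsLocalMin.mul_sq_norm_sub_le_sub (Filter.Eventually.of_forall hmin)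
      (hf.differentiable (by norm_num)) hHess
      (fun x => Matrix.mul_sq_norm_le_inner_toEuclideanCLM (hstr' x)) xk
  have hC0 : 0 ≤ C := hC ▸ by positivity
  have hnorm : ‖Hess (xk + τ • (xs - xk)) - G‖ ≤ μ * C := by
    rw [hC, hG]
    refine (norm_sub_intervalIntegral_le hseg fun s hs => ?_).trans
      (mul_le_of_half_mul_sq_le hμ hM.le (norm_nonneg _) hgrowth)
    exact norm_comp_add_smul_sub_le hM.le hlipH xk _ hτ hs
  refine ⟨Matrix.one_div_smul_le_of_le_smul (by linarith) ?_, ?_⟩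
  · exact Matrix.le_one_add_smul_of_norm_sub_le (Matrix.isHermitian_of_smul_one_le hGμ)
      (hstr' _) hC0 (by rwa [norm_sub_rev])
  · exact Matrix.le_one_add_smul_of_norm_sub_le (Matrix.isHermitian_of_smul_one_le (hstr' _))
      hGμ hC0 hnorm

/-- Loewner sandwich between the averaged Hessian `G_k` along the segment to `x_*`
and the Hessian at intermediate points of the segment. -/
theorem hessian_on_segment_vs_averaged {d : ℕ}
    (f : EuclideanSpace ℝ (Fin d) → ℝ) (μ M : ℝ) (hμ : 0 < μ) (hM : 0 < M)
    (Hess : EuclideanSpace ℝ (Fin d) → Matrix (Fin d) (Fin d) ℝ)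
    (hf : ContDiff ℝ 2 f)
    (hHess : ∀ x, HasFDerivAt (gradient f) (Matrix.toEuclideanCLM (𝕜 := ℝ) (Hess x)) x)
    (hsymm : ∀ x, (Hess x).IsHermitian)
    (hstr : ∀ x, (Hess x - μ • (1 : Matrix (Fin d) (Fin d) ℝ)).PosSemidef)
    (hlipH : ∀ x y, ‖Hess x - Hess y‖ ≤ M * ‖x - y‖)
    (xs : EuclideanSpace ℝ (Fin d)) (hmin : ∀ y, f xs ≤ f y)
    (xk : EuclideanSpace ℝ (Fin d))
    (G : Matrix (Fin d) (Fin d) ℝ)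
    (hG : G = ∫ τ in (0:ℝ)..1, Hess (xk + τ • (xs - xk)))
    (C : ℝ) (hC : C = (M / μ ^ ((3:ℝ)/2)) * Real.sqrt (2 * (f xk - f xs))) :
    ∀ τ ∈ Set.Icc (0:ℝ) 1,
      (Hess (xk + τ • (xs - xk)) - (1 / (1 + C)) • G).PosSemidef ∧
      ((1 + C) • G - Hess (xk + τ • (xs - xk))).PosSemidef :=
  hessian_on_segment_vs_averaged_general f μ M hμ hM Hess hf hHess hstr hlipH xs hmin xk G hG C hC
end

section
/- Let f : ℝ^d → ℝ be twice continuously differentiable, μ-strongly convex, with M-Lipschitz Hessian and minimizer x_*. Suppose x_k, x_{k+1} ∈ ℝ^d satisfy ∇f(x_{k+1})ᵀ(x_{k+1} - x_k) = 0 and f(x_{k+1}) ≤ f(x_k). Let s_k = x_{k+1} - x_k, y_k = ∇f(x_{k+1}) - ∇f(x_k), and C_k = (M/μ^{3/2})√(2(f(x_k) - f(x_*))). Then f(x_k) - f(x_{k+1}) ≥ (1/(2(1 + C_k))) s_kᵀ y_k. -/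
open Set
open scoped InnerProductSpace Matrix.Norms.L2Operator

/-!
Restrict `f` to the segment from `x_{k+1}` to `x_k` and put `v = x_k - x_{k+1}`. Orthogonality
kills the first-order term at `x_{k+1}`, so Taylor's formula with Lagrange remainder gives
`f(x_k) - f(x_{k+1}) = ⟪∇²f(ξ) v, v⟫ / 2`, while the mean value theorem for `t ↦ ⟪∇f, v⟫` gives
`s_kᵀ y_k = ⟪∇²f(η) v, v⟫`, with `ξ, η` on the segment. The first identity and strong convexity
give `μ ‖v‖² ≤ 2 (f(x_k) - f(x_*))`, i.e. `M ‖v‖ ≤ C_k μ`; hence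
`‖∇²f(η) - ∇²f(ξ)‖ ≤ C_k μ`, and since `⟪∇²f(ξ) v, v⟫ ≥ μ ‖v‖²` this yields
`⟪∇²f(η) v, v⟫ ≤ (1 + C_k) ⟪∇²f(ξ) v, v⟫`.
-/

theorem exists_sub_eq_mul_sq_div_two_of_deriv_eq_zero {φ φ' φ'' : ℝ → ℝ} {a b : ℝ} (hab : a < b)
    (hφ : ∀ t ∈ Icc a b, HasDerivAt φ (φ' t) t) (hφ' : ∀ t ∈ Icc a b, HasDerivAt φ' (φ'' t) t)
    (ha : φ' a = 0) :
    ∃ τ ∈ Ioo a b, φ b - φ a = φ'' τ * (b - a) ^ 2 / 2 := by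
  -- Cauchy's mean value theorem against `(t - a)²`, then the mean value theorem for `φ'` on `[a, c]`.
  obtain ⟨c, hc, hφc⟩ := exists_ratio_hasDerivAt_eq_ratio_slope φ φ' hab
    (fun t ht => (hφ t ht).continuousAt.continuousWithinAt)
    (fun t ht => hφ t (Ioo_subset_Icc_self ht)) (fun t => (t - a) ^ 2) (fun t => 2 * (t - a))
    (by fun_prop) (fun t _ => by simpa using ((hasDerivAt_id t).sub_const a).fun_pow 2)
  have hIcc : Icc a c ⊆ Icc a b := Icc_subset_Icc_right hc.2.le
  obtain ⟨τ, hτ, hφ'c⟩ := exists_hasDerivAt_eq_slope φ' φ'' hc.1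
    (fun t ht => (hφ' t (hIcc ht)).continuousAt.continuousWithinAt)
    (fun t ht => hφ' t (hIcc (Ioo_subset_Icc_self ht)))
  refine ⟨τ, ⟨hτ.1, hτ.2.trans hc.2⟩, ?_⟩
  have hca : c - a ≠ 0 := sub_ne_zero.mpr hc.1.ne'
  rw [hφ'c, ha]
  simp only [sub_self, ne_eq, OfNat.ofNat_ne_zero, not_false_eq_true, zero_pow, sub_zero] at hφc
  field_simp
  linear_combination -hφc

section LipschitzHessian

variable {E : Type*} [NormedAddCommGroup E] [InnerProductSpace ℝ E]

theorem HasFDerivAt.hasDerivAt_comp_add_smul {F : Type*} [NormedAddCommGroup F]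
    [NormedSpace ℝ F] {g : E → F} {g' : E →L[ℝ] F} {x v : E} {t : ℝ}
    (hg : HasFDerivAt g g' (x + t • v)) : HasDerivAt (fun s : ℝ => g (x + s • v)) (g' v) t := by
  simpa only [one_smul, Function.comp_def, id] using
    hg.comp_hasDerivAt t (((hasDerivAt_id t).smul_const v).const_add x)

theorem HasFDerivAt.hasDerivAt_inner_comp_add_smul {g : E → E} {G : E →L[ℝ] E} {x v : E} {t : ℝ}
    (hg : HasFDerivAt g G (x + t • v)) :
    HasDerivAt (fun s : ℝ => ⟪g (x + s • v), v⟫_ℝ) ⟪G v, v⟫_ℝ t := by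
  simpa only [inner_zero_right, zero_add] using
    hg.hasDerivAt_comp_add_smul.inner ℝ (hasDerivAt_const t v)

theorem exists_inner_sub_eq_inner_apply_add_smul {g : E → E} {H : E → E →L[ℝ] E}
    (hH : ∀ z, HasFDerivAt g (H z) z) (x y : E) :
    ∃ σ ∈ Ioo (0 : ℝ) 1, ⟪g x - g y, x - y⟫_ℝ = ⟪H (y + σ • (x - y)) (x - y), x - y⟫_ℝ := by
  have hderiv (t : ℝ) := (hH (y + t • (x - y))).hasDerivAt_inner_comp_add_smul
  obtain ⟨σ, hσ, hslope⟩ := exists_hasDerivAt_eq_slope _ _ zero_lt_one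
    (fun t _ => (hderiv t).continuousAt.continuousWithinAt) (fun t _ => hderiv t)
  refine ⟨σ, hσ, ?_⟩
  rw [hslope]
  simp [inner_sub_left]

theorem ContinuousLinearMap.inner_apply_self_le_one_add_mul {A B : E →L[ℝ] E} {μ C : ℝ} (v : E)
    (hC : 0 ≤ C) (hB : μ * ‖v‖ ^ 2 ≤ ⟪B v, v⟫_ℝ) (hAB : ‖A - B‖ ≤ C * μ) :
    ⟪A v, v⟫_ℝ ≤ (1 + C) * ⟪B v, v⟫_ℝ := by
  have hdiff : ⟪A v, v⟫_ℝ - ⟪B v, v⟫_ℝ ≤ C * (μ * ‖v‖ ^ 2) := calc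
    _ = ⟪(A - B) v, v⟫_ℝ := by rw [sub_apply, inner_sub_left]
    _ ≤ ‖(A - B) v‖ * ‖v‖ := real_inner_le_norm _ _
    _ ≤ ‖A - B‖ * ‖v‖ * ‖v‖ := by gcongr; exact le_opNorm _ _
    _ ≤ C * μ * ‖v‖ * ‖v‖ := by gcongr
    _ = C * (μ * ‖v‖ ^ 2) := by ring
  nlinarith [mul_le_mul_of_nonneg_left hB hC]

variable [CompleteSpace E] {f : E → ℝ} {H : E → E →L[ℝ] E} {μ M C : ℝ}

theorem exists_sub_eq_inner_apply_add_smul_div_two (hf : Differentiable ℝ f)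
    (hH : ∀ z, HasFDerivAt (gradient f) (H z) z) {x y : E}
    (horth : ⟪gradient f y, x - y⟫_ℝ = 0) :
    ∃ τ ∈ Ioo (0 : ℝ) 1, f x - f y = ⟪H (y + τ • (x - y)) (x - y), x - y⟫_ℝ / 2 := by
  have hφ (t : ℝ) : HasDerivAt (fun s : ℝ => f (y + s • (x - y)))
      ⟪gradient f (y + t • (x - y)), x - y⟫_ℝ t :=
    (hf _).hasGradientAt.hasFDerivAt.hasDerivAt_comp_add_smul
  obtain ⟨τ, hτ, h⟩ := exists_sub_eq_mul_sq_div_two_of_deriv_eq_zero zero_lt_one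
    (fun t _ => hφ t) (fun t _ => (hH (y + t • (x - y))).hasDerivAt_inner_comp_add_smul)
    (by simpa using horth)
  exact ⟨τ, hτ, by simpa using h⟩

theorem mul_norm_sq_le_two_mul_sub (hf : Differentiable ℝ f)
    (hH : ∀ z, HasFDerivAt (gradient f) (H z) z) (hstr : ∀ z v, μ * ‖v‖ ^ 2 ≤ ⟪H z v, v⟫_ℝ)
    {x y : E} (horth : ⟪gradient f y, x - y⟫_ℝ = 0) :
    μ * ‖x - y‖ ^ 2 ≤ 2 * (f x - f y) := by
  obtain ⟨τ, -, hτ⟩ := exists_sub_eq_inner_apply_add_smul_div_two hf hH horth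
  linarith [hstr (y + τ • (x - y)) (x - y)]

theorem inner_sub_gradient_le_of_lipschitz_hessian (hf : Differentiable ℝ f)
    (hH : ∀ z, HasFDerivAt (gradient f) (H z) z) (hstr : ∀ z v, μ * ‖v‖ ^ 2 ≤ ⟪H z v, v⟫_ℝ)
    (hlip : ∀ z w, ‖H z - H w‖ ≤ M * ‖z - w‖) (hM : 0 ≤ M) (hC : 0 ≤ C) {x y : E}
    (horth : ⟪gradient f y, x - y⟫_ℝ = 0) (hxy : M * ‖x - y‖ ≤ C * μ) :
    ⟪gradient f x - gradient f y, x - y⟫_ℝ ≤ 2 * (1 + C) * (f x - f y) := by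
  obtain ⟨τ, hτ, hfxy⟩ := exists_sub_eq_inner_apply_add_smul_div_two hf hH horth
  obtain ⟨σ, hσ, hgxy⟩ := exists_inner_sub_eq_inner_apply_add_smul hH x y
  have hστ : ‖H (y + σ • (x - y)) - H (y + τ • (x - y))‖ ≤ C * μ := calc
    _ ≤ M * ‖(σ - τ) • (x - y)‖ := by
      simpa [sub_smul] using hlip (y + σ • (x - y)) (y + τ • (x - y))
    _ ≤ M * ‖x - y‖ := by
      rw [norm_smul, Real.norm_eq_abs]
      gcongr
      exact mul_le_of_le_one_left (norm_nonneg _) (abs_sub_le_iff.mpr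
        ⟨by linarith [hσ.2, hτ.1], by linarith [hσ.1, hτ.2]⟩)
    _ ≤ C * μ := hxy
  rw [hgxy, hfxy]
  linarith [(H _).inner_apply_self_le_one_add_mul (x - y) hC (hstr (y + τ • (x - y)) _) hστ]

end LipschitzHessian

theorem Matrix.PosSemidef.mul_norm_sq_le_inner_toEuclideanCLM {n : Type*} [Fintype n]
    [DecidableEq n] {A : Matrix n n ℝ} {μ : ℝ} (hA : (A - μ • 1).PosSemidef)
    (x : EuclideanSpace ℝ n) :
    μ * ‖x‖ ^ 2 ≤ ⟪toEuclideanCLM (𝕜 := ℝ) A x, x⟫_ℝ := by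
  have h : 0 ≤ ⟪toEuclideanCLM (𝕜 := ℝ) (A - μ • 1) x, x⟫_ℝ :=
    (Matrix.isPositive_toEuclideanLin_iff.mpr hA).inner_nonneg_left x
  simpa only [map_sub, map_smul, map_one, _root_.sub_apply,
    _root_.smul_apply, one_apply_eq_self, inner_sub_left,
    real_inner_smul_left, real_inner_self_eq_norm_sq, sub_nonneg] using h

theorem mul_le_div_rpow_mul_sqrt_mul {μ M r D : ℝ} (hμ : 0 < μ) (hM : 0 ≤ M) (hr : 0 ≤ r)
    (h : μ * r ^ 2 ≤ D) :
    M * r ≤ M / μ ^ ((3 : ℝ) / 2) * √D * μ := by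
  have hμ32 : μ ^ ((3 : ℝ) / 2) = μ * √μ := by
    rw [show (3 : ℝ) / 2 = 1 + 1 / 2 by norm_num, Real.rpow_add hμ, Real.rpow_one,
      ← Real.sqrt_eq_rpow]
  have hr' : r * √μ ≤ √D := by
    rw [← Real.sqrt_sq hr, ← Real.sqrt_mul (sq_nonneg _)]
    exact Real.sqrt_le_sqrt (by linarith)
  have hsqrt : 0 < √μ := Real.sqrt_pos.mpr hμ
  rw [hμ32, show M / (μ * √μ) * √D * μ = M * √D / √μ by field_simp, le_div_iff₀ hsqrt,
    mul_assoc]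
  exact mul_le_mul_of_nonneg_left hr' hM

theorem function_decrease_hessian_lipschitz_general {d : ℕ}
    (f : EuclideanSpace ℝ (Fin d) → ℝ) (μ M : ℝ) (hμ : 0 < μ) (hM : 0 < M)
    (Hess : EuclideanSpace ℝ (Fin d) → Matrix (Fin d) (Fin d) ℝ)
    (hf : ContDiff ℝ 2 f)
    (hHess : ∀ z, HasFDerivAt (gradient f) (Matrix.toEuclideanCLM (𝕜 := ℝ) (Hess z)) z)
    (hstr : ∀ z, (Hess z - μ • (1 : Matrix (Fin d) (Fin d) ℝ)).PosSemidef)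
    (hlipH : ∀ z w, ‖Hess z - Hess w‖ ≤ M * ‖z - w‖)
    (xs : EuclideanSpace ℝ (Fin d)) (hmin : ∀ y, f xs ≤ f y)
    (xk xk1 : EuclideanSpace ℝ (Fin d))
    (horth : ⟪gradient f xk1, xk1 - xk⟫_ℝ = 0)
    (C : ℝ) (hC : C = (M / μ ^ ((3:ℝ)/2)) * Real.sqrt (2 * (f xk - f xs))) :
    f xk - f xk1 ≥ (1 / (2 * (1 + C))) *
      ⟪xk1 - xk, gradient f xk1 - gradient f xk⟫_ℝ := by
  have hfd : Differentiable ℝ f := hf.differentiable (by norm_num)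
  have hstr' (z) := (hstr z).mul_norm_sq_le_inner_toEuclideanCLM
  have hlip' (z w) : ‖Matrix.toEuclideanCLM (𝕜 := ℝ) (Hess z)
      - Matrix.toEuclideanCLM (𝕜 := ℝ) (Hess w)‖ ≤ M * ‖z - w‖ := by
    rw [← map_sub, ← Matrix.cstar_norm_def]
    exact hlipH z w
  have horth' : ⟪gradient f xk1, xk - xk1⟫_ℝ = 0 := by
    rw [← neg_sub, inner_neg_right, horth, neg_zero]
  have hgap : μ * ‖xk - xk1‖ ^ 2 ≤ 2 * (f xk - f xs) :=
    (mul_norm_sq_le_two_mul_sub hfd hHess hstr' horth').trans (by linarith [hmin xk1])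
  have hC0 : 0 ≤ C := by rw [hC]; positivity
  have hdist : M * ‖xk - xk1‖ ≤ C * μ :=
    hC ▸ mul_le_div_rpow_mul_sqrt_mul hμ hM.le (norm_nonneg _) hgap
  have key := inner_sub_gradient_le_of_lipschitz_hessian hfd hHess hstr' hlip' hM.le hC0
    horth' hdist
  rw [ge_iff_le, one_div, inv_mul_le_iff₀ (by positivity), ← inner_neg_neg, neg_sub, neg_sub,
    real_inner_comm]
  exact key

/-- Under exact line search orthogonality and an `M`-Lipschitz Hessian,
`f(x_k) - f(x_{k+1}) ≥ s_kᵀ y_k / (2 (1 + C_k))`. -/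
theorem function_decrease_hessian_lipschitz {d : ℕ}
    (f : EuclideanSpace ℝ (Fin d) → ℝ) (μ M : ℝ) (hμ : 0 < μ) (hM : 0 < M)
    (Hess : EuclideanSpace ℝ (Fin d) → Matrix (Fin d) (Fin d) ℝ)
    (hf : ContDiff ℝ 2 f)
    (hHess : ∀ z, HasFDerivAt (gradient f) (Matrix.toEuclideanCLM (𝕜 := ℝ) (Hess z)) z)
    (hsymm : ∀ z, (Hess z).IsHermitian)
    (hstr : ∀ z, (Hess z - μ • (1 : Matrix (Fin d) (Fin d) ℝ)).PosSemidef)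
    (hlipH : ∀ z w, ‖Hess z - Hess w‖ ≤ M * ‖z - w‖)
    (xs : EuclideanSpace ℝ (Fin d)) (hmin : ∀ y, f xs ≤ f y)
    (xk xk1 : EuclideanSpace ℝ (Fin d))
    (horth : ⟪gradient f xk1, xk1 - xk⟫_ℝ = 0) (hdec : f xk1 ≤ f xk)
    (C : ℝ) (hC : C = (M / μ ^ ((3:ℝ)/2)) * Real.sqrt (2 * (f xk - f xs))) :
    f xk - f xk1 ≥ (1 / (2 * (1 + C))) *
      ⟪xk1 - xk, gradient f xk1 - gradient f xk⟫_ℝ :=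
  function_decrease_hessian_lipschitz_general f μ M hμ hM Hess hf hHess hstr hlipH xs hmin xk xk1
    horth C hC
end
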